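/- For the standardized Student t density g(z; ν) with ν > 0, the scale Fisher information integral satisfies ∫_ℝ z² ((∂g/∂z)(z; ν))² / g(z; ν) dz + 2 ∫_ℝ z (∂g/∂z)(z; ν) dz + 1 = 2ν / (ν + 3). -/

import Mathlib

open MeasureTheory

/-- The density of the standardized Student `t`-distribution with `ν` degrees of
freedom: `g(z;ν) = Γ((ν+1)/2)/(√(νπ) Γ(ν/2)) (1 + z²/ν)^{−(ν+1)/2}`. -/
noncomputable def studentPdf (ν z : ℝ) : ℝ :=
  Real.Gamma ((ν + 1) / 2) / (Real.sqrt (ν * Real.pi) * Real.Gamma (ν / 2)) *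
    (1 + z ^ 2 / ν) ^ (-((ν + 1) / 2))

/-!
The score of the Student density is `g' z = -((ν + 1) / ν) * z / (1 + z² / ν) * g z`, so both
integrals are moments `∫ z ^ (2k) / (1 + z² / ν) ^ k * g z` with `k = 2` and `k = 1`. The
substitutions `z = √ν t`, `t² = y` and `y = u / (1 - u)` turn such a moment into the Beta ratio
`ν ^ k * B(k + 1/2, ν/2) / B(1/2, ν/2)`, and `B(a + 1, b) = a / (a + b) * B(a, b)` evaluates the
two ratios as `3ν² / ((ν + 1)(ν + 3))` and `ν / (ν + 1)`.
-/

open Set Real ProbabilityTheory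

lemma integral_Ioo_rpow_mul_one_sub_rpow {a b : ℝ} (ha : 0 < a) (hb : 0 < b) :
    ∫ u in Ioo (0 : ℝ) 1, u ^ (a - 1) * (1 - u) ^ (b - 1) = beta a b := by
  have h_ofReal : ∀ u ∈ Ioo (0 : ℝ) 1,
      ((u ^ (a - 1) * (1 - u) ^ (b - 1) : ℝ) : ℂ)
        = (u : ℂ) ^ ((a : ℂ) - 1) * (1 - u) ^ ((b : ℂ) - 1) := by
    rintro u ⟨hu0, hu1⟩
    push_cast
    rw [Complex.ofReal_cpow hu0.le, Complex.ofReal_cpow (by linarith)]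
    push_cast
    rfl
  rw [beta_eq_betaIntegralReal a b ha hb, Complex.betaIntegral,
    intervalIntegral.integral_of_le zero_le_one, integral_Ioc_eq_integral_Ioo,
    ← setIntegral_congr_fun measurableSet_Ioo h_ofReal, integral_complex_ofReal,
    Complex.ofReal_re]

lemma image_div_one_add_Ioi : (fun y : ℝ ↦ y / (1 + y)) '' Ioi 0 = Ioo 0 1 := by
  ext u
  constructor
  · rintro ⟨y, hy, rfl⟩
    have hy : 0 < y := hy
    exact ⟨by positivity, (div_lt_one (by positivity)).2 (by linarith)⟩
  · rintro ⟨hu0, hu1⟩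
    refine ⟨u / (1 - u), div_pos hu0 (by linarith), ?_⟩
    have : 1 - u ≠ 0 := by linarith
    field_simp
    ring

lemma integral_Ioi_rpow_mul_one_add_rpow_neg {a b : ℝ} (ha : 0 < a) (hb : 0 < b) :
    ∫ y in Ioi (0 : ℝ), y ^ (a - 1) * (1 + y) ^ (-(a + b)) = beta a b := by
  have hderiv : ∀ y ∈ Ioi (0 : ℝ),
      HasDerivWithinAt (fun y ↦ y / (1 + y)) (1 / (1 + y) ^ 2) (Ioi 0) y := by
    intro y (hy : 0 < y)
    have h : HasDerivAt (fun y : ℝ ↦ y / (1 + y)) ((1 * (1 + y) - y * 1) / (1 + y) ^ 2) y :=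
      (hasDerivAt_id' y).div ((hasDerivAt_id' y).const_add 1) (by positivity)
    exact (h.congr_deriv (by ring)).hasDerivWithinAt
  have hinj : InjOn (fun y : ℝ ↦ y / (1 + y)) (Ioi 0) := by
    intro x (hx : 0 < x) y (hy : 0 < y) hxy
    simp only at hxy
    rw [div_eq_div_iff (by positivity) (by positivity)] at hxy
    linarith
  rw [← integral_Ioo_rpow_mul_one_sub_rpow ha hb, ← image_div_one_add_Ioi,
    integral_image_eq_integral_abs_deriv_smul measurableSet_Ioi hderiv hinj]
  refine setIntegral_congr_fun measurableSet_Ioi fun y (hy : 0 < y) ↦ ?_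
  have hA : 0 < 1 + y := by positivity
  have h_one_sub : 1 - y / (1 + y) = (1 + y)⁻¹ := by field_simp; ring
  have h_exp : (1 + y) ^ (-(a + b)) =
      ((1 + y) ^ (a - 1))⁻¹ * ((1 + y) ^ (b - 1))⁻¹ * ((1 + y) ^ 2)⁻¹ := by
    rw [← rpow_neg hA.le, ← rpow_neg hA.le, ← rpow_natCast, ← rpow_neg hA.le,
      ← rpow_add hA, ← rpow_add hA]
    congr 1
    push_cast
    ring
  rw [h_one_sub, div_rpow hy.le hA.le, inv_rpow hA.le, h_exp, smul_eq_mul,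
    abs_of_pos (by positivity)]
  field_simp

lemma integral_Ioi_pow_mul_one_add_sq_rpow_neg (k : ℕ) {b : ℝ} (hb : 0 < b) :
    ∫ t in Ioi (0 : ℝ), t ^ (2 * k) * (1 + t ^ 2) ^ (-(k + 1 / 2 + b))
      = beta (k + 1 / 2) b / 2 := by
  have h_subst := integral_comp_rpow_Ioi_of_pos two_pos
    (g := fun y ↦ y ^ ((k : ℝ) + 1 / 2 - 1) * (1 + y) ^ (-(k + 1 / 2 + b)))
  rw [integral_Ioi_rpow_mul_one_add_rpow_neg (by positivity) hb] at h_subst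
  rw [← h_subst, ← integral_div]
  refine setIntegral_congr_fun measurableSet_Ioi fun t (ht : 0 < t) ↦ ?_
  have h_pow : t ^ (2 - 1 : ℝ) * (t ^ (2 : ℝ)) ^ ((k : ℝ) + 1 / 2 - 1) = t ^ (2 * k) := by
    rw [← rpow_mul ht.le, ← rpow_add ht, ← rpow_natCast]
    congr 1
    push_cast
    ring
  rw [smul_eq_mul, ← h_pow, rpow_two]
  ring

lemma integral_pow_mul_one_add_sq_div_rpow_neg (k : ℕ) {ν b : ℝ} (hν : 0 < ν) (hb : 0 < b) :
    ∫ x, x ^ (2 * k) * (1 + x ^ 2 / ν) ^ (-(k + 1 / 2 + b))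
      = √ν * ν ^ k * beta (k + 1 / 2) b := by
  set f : ℝ → ℝ := fun x ↦ x ^ (2 * k) * (1 + x ^ 2 / ν) ^ (-(k + 1 / 2 + b))
  have h_even : ∀ x, f x = f |x| := fun x ↦ by simp only [f, pow_mul, sq_abs]
  have h_scale :
      ∀ t, f (√ν * t) = ν ^ k * (t ^ (2 * k) * (1 + t ^ 2) ^ (-(k + 1 / 2 + b))) := by
    intro t
    have hν' : (√ν) ^ 2 = ν := sq_sqrt hν.le
    simp only [f, pow_mul, mul_pow, hν']
    field_simp
  have h_Ioi := integral_comp_mul_left_Ioi f 0 (sqrt_pos.2 hν)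
  simp only [h_scale, mul_zero, integral_const_mul,
    integral_Ioi_pow_mul_one_add_sq_rpow_neg k hb, smul_eq_mul] at h_Ioi
  rw [eq_inv_mul_iff_mul_eq₀ (sqrt_pos.2 hν).ne'] at h_Ioi
  rw [funext h_even, integral_comp_abs, ← h_Ioi]
  ring

lemma beta_add_one_left {a b : ℝ} (ha : a ≠ 0) (hab : a + b ≠ 0) :
    beta (a + 1) b = a / (a + b) * beta a b := by
  rw [beta, beta, add_right_comm, Gamma_add_one ha, Gamma_add_one hab]
  field_simp

lemma studentPdf_eq {ν : ℝ} (hν : 0 < ν) (z : ℝ) :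
    studentPdf ν z
      = (√ν * beta (1 / 2) (ν / 2))⁻¹ * (1 + z ^ 2 / ν) ^ (-((ν + 1) / 2)) := by
  have hΓ : Gamma (ν / 2) ≠ 0 := (Gamma_pos_of_pos (by positivity)).ne'
  rw [studentPdf, beta, Gamma_one_half_eq, sqrt_mul hν.le,
    show 1 / 2 + ν / 2 = (ν + 1) / 2 by ring]
  field_simp

lemma studentPdf_pos {ν : ℝ} (hν : 0 < ν) (z : ℝ) : 0 < studentPdf ν z := by
  rw [studentPdf_eq hν]
  have hB := beta_pos one_half_pos (half_pos hν)
  positivity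

lemma deriv_studentPdf {ν : ℝ} (hν : 0 < ν) (z : ℝ) :
    deriv (studentPdf ν) z = -((ν + 1) / ν) * z * (1 + z ^ 2 / ν)⁻¹ * studentPdf ν z := by
  have hX : 0 < 1 + z ^ 2 / ν := by positivity
  have h_base : HasDerivAt (fun w : ℝ ↦ 1 + w ^ 2 / ν) (2 * z / ν) z := by
    simpa using ((hasDerivAt_pow 2 z).div_const ν).const_add 1
  have h := (h_base.rpow_const (p := -((ν + 1) / 2)) (Or.inl hX.ne')).const_mul
    (√ν * beta (1 / 2) (ν / 2))⁻¹
  rw [funext (studentPdf_eq hν), h.deriv, rpow_sub_one hX.ne']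
  beta_reduce
  field_simp

lemma integral_pow_div_mul_studentPdf (k : ℕ) {ν : ℝ} (hν : 0 < ν) :
    ∫ z, z ^ (2 * k) / (1 + z ^ 2 / ν) ^ k * studentPdf ν z
      = ν ^ k * beta (k + 1 / 2) (ν / 2) / beta (1 / 2) (ν / 2) := by
  have h_kernel : ∀ z, z ^ (2 * k) / (1 + z ^ 2 / ν) ^ k * studentPdf ν z
      = (√ν * beta (1 / 2) (ν / 2))⁻¹
          * (z ^ (2 * k) * (1 + z ^ 2 / ν) ^ (-(k + 1 / 2 + ν / 2))) := by
    intro z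
    have hX : 0 < 1 + z ^ 2 / ν := by positivity
    rw [studentPdf_eq hν, show -((k : ℝ) + 1 / 2 + ν / 2) = -k + -((ν + 1) / 2) by ring,
      rpow_add hX, rpow_neg hX.le (k : ℝ), rpow_natCast]
    ring
  have hB := beta_pos one_half_pos (half_pos hν)
  have hsqrt := sqrt_pos.2 hν
  rw [integral_congr_ae (.of_forall h_kernel), integral_const_mul,
    integral_pow_mul_one_add_sq_div_rpow_neg k hν (half_pos hν)]
  field_simp

/-- For the standardized Student `t` density, the scale Fisher information integral
satisfies `∫ z² ((∂g/∂z)(z;ν))²/g(z;ν) dz + 2 ∫ z (∂g/∂z)(z;ν) dz + 1 = 2ν/(ν+3)`. -/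
theorem stmt9 (ν : ℝ) (hν : 0 < ν) :
    (∫ z : ℝ, z ^ 2 * (deriv (fun w => studentPdf ν w) z) ^ 2 / studentPdf ν z) +
        2 * (∫ z : ℝ, z * deriv (fun w => studentPdf ν w) z) + 1
      = 2 * ν / (ν + 3) := by
  have h_fisher : ∀ z, z ^ 2 * (deriv (studentPdf ν) z) ^ 2 / studentPdf ν z
      = ((ν + 1) / ν) ^ 2 * (z ^ (2 * 2) / (1 + z ^ 2 / ν) ^ 2 * studentPdf ν z) := by
    intro z
    have hg := (studentPdf_pos hν z).ne'
    rw [deriv_studentPdf hν]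
    field_simp
  have h_score : ∀ z, z * deriv (studentPdf ν) z
      = -((ν + 1) / ν) * (z ^ (2 * 1) / (1 + z ^ 2 / ν) ^ 1 * studentPdf ν z) := by
    intro z
    rw [deriv_studentPdf hν]
    field_simp
    ring
  simp only [h_fisher, h_score, integral_const_mul, integral_pow_div_mul_studentPdf _ hν]
  have hB := beta_pos one_half_pos (half_pos hν)
  rw [show ((2 : ℕ) : ℝ) + 1 / 2 = 1 / 2 + 1 + 1 by norm_num,
    show ((1 : ℕ) : ℝ) + 1 / 2 = 1 / 2 + 1 by norm_num,
    beta_add_one_left (by positivity) (by positivity),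
    beta_add_one_left (by positivity) (by positivity)]
  field_simp
  ring
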